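/- Let A be a unital C*-algebra, a a nonzero positive element of A, and x ∈ A admitting an a-adjoint x^{#a}, with ‖x‖_a < ∞ and ‖x^{#a}‖_a < ∞. Then for every 0 ≤ α ≤ 1, v_a(x)² ≤ ‖α·x^{#a}x + (1 − α)·x x^{#a}‖_a. -/

import Mathlib

/-
For a state `f ∈ S_a(A)`, `pᶠ(u) = aNormAt f a u = √(f (u⋆ a u))` is the norm of `√a u` in the
GNS space of `f`, so it obeys Cauchy–Schwarz and the triangle inequality. Cauchy–Schwarz against
`1` (recall `f a = 1`) bounds `|f (a x)|` by `pᶠ(x)` and, as `a x = (x^{#a})⋆ a`, by `pᶠ(x^{#a})`.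
Hence for `y = α x^{#a} x + (1 - α) x x^{#a}`, using `a y = α x⋆ a x + (1 - α) (x^{#a})⋆ a x^{#a}`,
  `|f (a x)|² ≤ α pᶠ(x)² + (1 - α) pᶠ(x^{#a})² = Re f (a y) ≤ pᶠ(y) ≤ ‖y‖ₐ`.
The last step needs `‖y‖ₐ < ∞`, which follows from `‖w z‖ₐ ≤ ‖w‖ₐ ‖z‖ₐ`: the compression
`u ↦ f (z⋆ u z)`, once normalized, lies in `S_a(A)`.
-/

open scoped ComplexOrder

section

variable {A : Type*} [CStarAlgebra A] [PartialOrder A] [StarOrderedRing A]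

/-- A positive linear functional on `A`: `f (x* x) ≥ 0` for all `x`. -/
def IsPosLF (f : A →ₗ[ℂ] ℂ) : Prop := ∀ x : A, 0 ≤ f (star x * x)

/-- Membership in `S_a(A)`: positive linear functionals `f` with `f a = 1`. -/
def MemSa (a : A) (f : A →ₗ[ℂ] ℂ) : Prop := IsPosLF f ∧ f a = 1

/-- The set of values whose supremum is the `a`-seminorm `‖x‖ₐ`. -/
def aNormSet (a x : A) : Set ℝ :=
  {r : ℝ | ∃ f : A →ₗ[ℂ] ℂ, MemSa a f ∧ r = Real.sqrt (f (star x * a * x)).re}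

/-- The `a`-seminorm `‖x‖ₐ = sup {√(f(x* a x)) : f ∈ S_a(A)}`. -/
noncomputable def aNorm (a x : A) : ℝ := sSup (aNormSet a x)

/-- The `a`-numerical radius `vₐ(x) = sup {|f(a x)| : f ∈ S_a(A)}`. -/
noncomputable def aNR (a x : A) : ℝ :=
  sSup {r : ℝ | ∃ f : A →ₗ[ℂ] ℂ, MemSa a f ∧ r = ‖f (a * x)‖}

section

open scoped InnerProductSpace

variable {f h : A →ₗ[ℂ] ℂ} {a : A}

noncomputable def aNormAt (f : A →ₗ[ℂ] ℂ) (a u : A) : ℝ := √(f (star u * a * u)).re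

section OrderFree

omit [PartialOrder A] [StarOrderedRing A]

lemma IsPosLF.add (hf : IsPosLF f) (hh : IsPosLF h) : IsPosLF (f + h) :=
  fun u => add_nonneg (hf u) (hh u)

lemma IsPosLF.smul (hf : IsPosLF f) {c : ℂ} (hc : 0 ≤ c) : IsPosLF (c • f) :=
  fun u => mul_nonneg hc (hf u)

lemma IsPosLF.comp_conj (hf : IsPosLF f) (z : A) :
    IsPosLF (f ∘ₗ LinearMap.mulLeft ℂ (star z) ∘ₗ LinearMap.mulRight ℂ z) := by
  intro u
  simpa [mul_assoc] using hf (u * z)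

lemma IsPosLF.memSa_inv_smul (hh : IsPosLF h) (hpos : 0 < h a) : MemSa a ((h a)⁻¹ • h) :=
  ⟨hh.smul (inv_nonneg.mpr hpos.le), by simp [hpos.ne']⟩

lemma aNormAt_nonneg (f : A →ₗ[ℂ] ℂ) (a u : A) : 0 ≤ aNormAt f a u := Real.sqrt_nonneg _

lemma MemSa.aNormAt_one (hf : MemSa a f) : aNormAt f a 1 = 1 := by
  simp [aNormAt, hf.2]

lemma aNorm_nonneg (a u : A) : 0 ≤ aNorm a u :=
  Real.sSup_nonneg (by rintro _ ⟨f, -, rfl⟩; exact aNormAt_nonneg f a u)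

lemma aNormAt_le_aNorm {u : A} (hu : BddAbove (aNormSet a u)) (hf : MemSa a f) :
    aNormAt f a u ≤ aNorm a u :=
  le_csSup hu ⟨f, hf, rfl⟩

lemma bddAbove_aNormSet_of_forall_le {u : A} {M : ℝ} (h : ∀ f, MemSa a f → aNormAt f a u ≤ M) :
    BddAbove (aNormSet a u) :=
  ⟨M, by rintro _ ⟨f, hf, rfl⟩; exact h f hf⟩

lemma sq_aNR_le {x : A} {c : ℝ} (hc : 0 ≤ c) (h : ∀ f, MemSa a f → ‖f (a * x)‖ ^ 2 ≤ c) :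
    aNR a x ^ 2 ≤ c := by
  have hle : aNR a x ≤ √c :=
    Real.sSup_le (by rintro _ ⟨f, hf, rfl⟩; exact Real.le_sqrt_of_sq_le (h f hf))
      (Real.sqrt_nonneg c)
  have hnonneg : 0 ≤ aNR a x := Real.sSup_nonneg (by rintro _ ⟨f, -, rfl⟩; exact norm_nonneg _)
  calc aNR a x ^ 2 ≤ √c ^ 2 := pow_le_pow_left₀ hnonneg hle 2
    _ = c := Real.sq_sqrt hc

lemma star_mul_eq_mul_of_mul_eq_star_mul (ha : IsSelfAdjoint a) {x xadj : A}
    (hadj : a * xadj = star x * a) : star xadj * a = a * x := by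
  simpa [ha.star_eq] using congrArg star hadj

end OrderFree

lemma IsPosLF.map_nonneg (hf : IsPosLF f) {b : A} (hb : 0 ≤ b) : 0 ≤ f b := by
  obtain ⟨c, rfl⟩ := CStarAlgebra.nonneg_iff_eq_star_mul_self.mp hb
  exact hf c

noncomputable def IsPosLF.toPositiveLinearMap (hf : IsPosLF f) : A →ₚ[ℂ] ℂ :=
  .mk₀ f fun _ => hf.map_nonneg

lemma star_sqrt_mul_mul_sqrt_mul (ha : 0 ≤ a) (u v : A) :
    star (CFC.sqrt a * u) * (CFC.sqrt a * v) = star u * a * v := by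
  rw [star_mul, (CFC.sqrt_nonneg a).star_eq, mul_assoc, ← mul_assoc (CFC.sqrt a),
    CFC.sqrt_mul_sqrt_self a ha, ← mul_assoc]

lemma IsPosLF.inner_toPreGNS_sqrt_mul (hf : IsPosLF f) (ha : 0 ≤ a) (u v : A) :
    ⟪hf.toPositiveLinearMap.toPreGNS (CFC.sqrt a * u),
      hf.toPositiveLinearMap.toPreGNS (CFC.sqrt a * v)⟫_ℂ = f (star u * a * v) := by
  rw [PositiveLinearMap.preGNS_inner_def]
  exact congrArg f (star_sqrt_mul_mul_sqrt_mul ha u v)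

lemma IsPosLF.aNormAt_eq_norm (hf : IsPosLF f) (ha : 0 ≤ a) (u : A) :
    aNormAt f a u = ‖hf.toPositiveLinearMap.toPreGNS (CFC.sqrt a * u)‖ := by
  rw [PositiveLinearMap.preGNS_norm_def]
  exact congrArg (fun b => √(f b).re) (star_sqrt_mul_mul_sqrt_mul ha u u).symm

lemma IsPosLF.norm_apply_le_aNormAt_mul (hf : IsPosLF f) (ha : 0 ≤ a) (u v : A) :
    ‖f (star u * a * v)‖ ≤ aNormAt f a u * aNormAt f a v := by
  rw [← hf.inner_toPreGNS_sqrt_mul ha, hf.aNormAt_eq_norm ha, hf.aNormAt_eq_norm ha]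
  exact norm_inner_le_norm _ _

lemma IsPosLF.aNormAt_add_le (hf : IsPosLF f) (ha : 0 ≤ a) (u v : A) :
    aNormAt f a (u + v) ≤ aNormAt f a u + aNormAt f a v := by
  simp only [hf.aNormAt_eq_norm ha, mul_add, map_add]
  exact norm_add_le _ _

lemma IsPosLF.aNormAt_smul (hf : IsPosLF f) (ha : 0 ≤ a) (c : ℂ) (u : A) :
    aNormAt f a (c • u) = ‖c‖ * aNormAt f a u := by
  simp only [hf.aNormAt_eq_norm ha, mul_smul_comm, map_smul]
  exact norm_smul _ _

lemma IsPosLF.sq_aNormAt (hf : IsPosLF f) (ha : 0 ≤ a) (u : A) :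
    aNormAt f a u ^ 2 = (f (star u * a * u)).re :=
  Real.sq_sqrt (Complex.nonneg_iff.mp (hf.map_nonneg (star_left_conjugate_nonneg ha u))).1

lemma MemSa.norm_apply_mul_le (hf : MemSa a f) (ha : 0 ≤ a) (v : A) :
    ‖f (a * v)‖ ≤ aNormAt f a v := by
  simpa [hf.aNormAt_one] using hf.1.norm_apply_le_aNormAt_mul ha 1 v

lemma MemSa.norm_apply_star_mul_le (hf : MemSa a f) (ha : 0 ≤ a) (u : A) :
    ‖f (star u * a)‖ ≤ aNormAt f a u := by
  simpa [hf.aNormAt_one] using hf.1.norm_apply_le_aNormAt_mul ha u 1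

/-- Normalizing `h + t f` into `S_a(A)` and letting `t → 0` also covers the case `h a = 0`,
where `h` itself cannot be normalized. -/
lemma IsPosLF.re_apply_le_mul_of_forall_memSa (hh : IsPosLF h) (ha : 0 ≤ a) (hf : MemSa a f)
    {b : A} {M : ℝ} (hM : ∀ g, MemSa a g → (g b).re ≤ M) : (h b).re ≤ M * (h a).re := by
  have hha : h a = ((h a).re : ℂ) :=
    Complex.ext rfl (Complex.nonneg_iff.mp (hh.map_nonneg ha)).2.symm
  have hha_re : 0 ≤ (h a).re := (Complex.nonneg_iff.mp (hh.map_nonneg ha)).1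
  have key : ∀ t > 0, (h b).re ≤ M * (h a).re + t * (M - (f b).re) := by
    intro t ht
    have hnorm : (h + (t : ℂ) • f) a = (((h a).re + t : ℝ) : ℂ) := by
      simp [hf.2, ← hha]
    have hpos : 0 < (h + (t : ℂ) • f) a := by
      rw [hnorm]; exact Complex.zero_lt_real.mpr (by positivity)
    have hg := hM _ ((hh.add (hf.1.smul (Complex.zero_le_real.mpr ht.le))).memSa_inv_smul hpos)
    rw [hnorm] at hg
    simp only [LinearMap.smul_apply, LinearMap.add_apply, smul_eq_mul, ← Complex.ofReal_inv,
      Complex.re_ofReal_mul, Complex.add_re] at hg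
    rw [inv_mul_le_iff₀ (by positivity)] at hg
    linarith
  have hlim : Filter.Tendsto (fun t : ℝ => M * (h a).re + t * (M - (f b).re))
      (nhdsWithin 0 (Set.Ioi 0)) (nhds (M * (h a).re)) :=
    tendsto_nhdsWithin_of_tendsto_nhds (by
      simpa using ((continuous_id.mul continuous_const).const_add (M * (h a).re)).tendsto 0)
  exact ge_of_tendsto hlim (eventually_nhdsWithin_of_forall key)

lemma MemSa.aNormAt_mul_le (hf : MemSa a f) (ha : 0 ≤ a) {w : A} (hw : BddAbove (aNormSet a w))
    (z : A) : aNormAt f a (w * z) ≤ aNorm a w * aNormAt f a z := by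
  have hM : ∀ g, MemSa a g → (g (star w * a * w)).re ≤ aNorm a w ^ 2 := by
    intro g hg
    rw [← hg.1.sq_aNormAt ha]
    exact pow_le_pow_left₀ (aNormAt_nonneg ..) (aNormAt_le_aNorm hw hg) 2
  have hz := (hf.1.comp_conj z).re_apply_le_mul_of_forall_memSa ha hf hM
  simp only [LinearMap.comp_apply, LinearMap.mulLeft_apply, LinearMap.mulRight_apply] at hz
  rw [← pow_le_pow_iff_left₀ (aNormAt_nonneg ..)
    (mul_nonneg (aNorm_nonneg a w) (aNormAt_nonneg ..)) two_ne_zero, mul_pow,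
    hf.1.sq_aNormAt ha, hf.1.sq_aNormAt ha]
  simpa [mul_assoc] using hz

lemma BddAbove.aNormSet_mul (ha : 0 ≤ a) {w z : A} (hw : BddAbove (aNormSet a w))
    (hz : BddAbove (aNormSet a z)) : BddAbove (aNormSet a (w * z)) :=
  bddAbove_aNormSet_of_forall_le fun _ hf => (hf.aNormAt_mul_le ha hw z).trans
    (mul_le_mul_of_nonneg_left (aNormAt_le_aNorm hz hf) (aNorm_nonneg a w))

lemma BddAbove.aNormSet_add (ha : 0 ≤ a) {u v : A} (hu : BddAbove (aNormSet a u))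
    (hv : BddAbove (aNormSet a v)) : BddAbove (aNormSet a (u + v)) :=
  bddAbove_aNormSet_of_forall_le fun _ hf => (hf.1.aNormAt_add_le ha u v).trans
    (add_le_add (aNormAt_le_aNorm hu hf) (aNormAt_le_aNorm hv hf))

lemma BddAbove.aNormSet_smul (ha : 0 ≤ a) {u : A} (hu : BddAbove (aNormSet a u)) (c : ℂ) :
    BddAbove (aNormSet a (c • u)) :=
  bddAbove_aNormSet_of_forall_le fun _ hf => (hf.1.aNormAt_smul ha c u).trans_le
    (mul_le_mul_of_nonneg_left (aNormAt_le_aNorm hu hf) (norm_nonneg c))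

lemma MemSa.sq_norm_apply_mul_le (hf : MemSa a f) (ha : 0 ≤ a) {x xadj : A}
    (hadj : a * xadj = star x * a) {α : ℝ} (hα0 : 0 ≤ α) (hα1 : α ≤ 1) :
    ‖f (a * x)‖ ^ 2 ≤ aNormAt f a ((α : ℂ) • (xadj * x) + ((1 - α : ℝ) : ℂ) • (x * xadj)) := by
  have hadj' := star_mul_eq_mul_of_mul_eq_star_mul (IsSelfAdjoint.of_nonneg ha) hadj
  have hx : ‖f (a * x)‖ ^ 2 ≤ aNormAt f a x ^ 2 :=
    pow_le_pow_left₀ (norm_nonneg _) (hf.norm_apply_mul_le ha x) 2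
  have hxadj : ‖f (a * x)‖ ^ 2 ≤ aNormAt f a xadj ^ 2 := by
    rw [← hadj']
    exact pow_le_pow_left₀ (norm_nonneg _) (hf.norm_apply_star_mul_le ha xadj) 2
  have hay : a * ((α : ℂ) • (xadj * x) + ((1 - α : ℝ) : ℂ) • (x * xadj)) =
      (α : ℂ) • (star x * a * x) + ((1 - α : ℝ) : ℂ) • (star xadj * a * xadj) := by
    rw [mul_add, mul_smul_comm, mul_smul_comm, ← mul_assoc, hadj, ← mul_assoc, ← hadj']
  have hre : (f (a * ((α : ℂ) • (xadj * x) + ((1 - α : ℝ) : ℂ) • (x * xadj)))).re =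
      α * aNormAt f a x ^ 2 + (1 - α) * aNormAt f a xadj ^ 2 := by
    rw [hay, map_add, map_smul, map_smul, hf.1.sq_aNormAt ha, hf.1.sq_aNormAt ha]
    simp
  have h1α : 0 ≤ 1 - α := sub_nonneg.mpr hα1
  calc ‖f (a * x)‖ ^ 2 = α * ‖f (a * x)‖ ^ 2 + (1 - α) * ‖f (a * x)‖ ^ 2 := by ring
    _ ≤ α * aNormAt f a x ^ 2 + (1 - α) * aNormAt f a xadj ^ 2 := by gcongr
    _ = (f (a * _)).re := hre.symm
    _ ≤ ‖f (a * _)‖ := Complex.re_le_norm _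
    _ ≤ _ := hf.norm_apply_mul_le ha _

end

theorem stmt5_general (a : A) (ha : 0 ≤ a)
    (x xadj : A) (hadj : a * xadj = star x * a)
    (hx : BddAbove (aNormSet a x)) (hxadj : BddAbove (aNormSet a xadj))
    (α : ℝ) (hα0 : 0 ≤ α) (hα1 : α ≤ 1) :
    aNR a x ^ 2 ≤ aNorm a ((α : ℂ) • (xadj * x) + ((1 - α : ℝ) : ℂ) • (x * xadj)) := by
  have hy : BddAbove (aNormSet a ((α : ℂ) • (xadj * x) + ((1 - α : ℝ) : ℂ) • (x * xadj))) :=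
    ((hxadj.aNormSet_mul ha hx).aNormSet_smul ha _).aNormSet_add ha
      ((hx.aNormSet_mul ha hxadj).aNormSet_smul ha _)
  exact sq_aNR_le (aNorm_nonneg a _) fun f hf =>
    (hf.sq_norm_apply_mul_le ha hadj hα0 hα1).trans (aNormAt_le_aNorm hy hf)

/-- `vₐ(x)² ≤ ‖α x^{#a} x + (1-α) x x^{#a}‖ₐ`. -/
theorem stmt5 (a : A) (ha : 0 ≤ a) (ha0 : a ≠ 0)
    (x xadj : A) (hadj : a * xadj = star x * a)
    (hx : BddAbove (aNormSet a x)) (hxadj : BddAbove (aNormSet a xadj))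
    (α : ℝ) (hα0 : 0 ≤ α) (hα1 : α ≤ 1) :
    aNR a x ^ 2 ≤ aNorm a ((α : ℂ) • (xadj * x) + ((1 - α : ℝ) : ℂ) • (x * xadj)) :=
  stmt5_general a ha x xadj hadj hx hxadj α hα0 hα1

end
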